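/- arXiv:2408.13518 — 2 statements merged into one kernel-verified Lean document; each statement's English description precedes it below -/
import Mathlib

section
/- Let T ≥ 1 be a natural number and β > 0 a real number. Suppose real numbers r_1, …, r_T (token-level rewards), Q_1, …, Q_T (optimal Q-values), V_1, …, V_{T+1} (optimal state values) with V_{T+1} = 0, and strictly positive real numbers p_1, …, p_T (optimal-policy action probabilities) and q_1, …, q_T (reference-policy action probabilities) satisfy, for every t ∈ {1, …, T}: (i) p_t = exp((Q_t − V_t)/β) (soft-optimal policy), and (ii) Q_t = r_t + β·log q_t + V_{t+1} (soft Bellman equation). Then the response-level reward decomposes as ∑_{t=1}^T r_t = β·∑_{t=1}^T log(p_t / q_t) + V_1. -/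
/-! Taking logarithms in the policy equation and substituting the Bellman equation gives, token
by token, `r t = β * log (p t / q t) + (V t - V (t + 1))`; summed over the trajectory, the value
differences telescope to `V 1 - V (T + 1) = V 1`. -/

open Finset Real

theorem sum_Icc_sub_succ {G : Type*} [AddCommGroup G] (V : ℕ → G) (n : ℕ) :
    ∑ t ∈ Icc 1 n, (V t - V (t + 1)) = V 1 - V (n + 1) := by
  rw [← Ico_add_one_right_eq_Icc, ← neg_sub, ← sum_Ico_sub V (by omega : 1 ≤ n + 1),
    ← sum_neg_distrib]
  simp only [neg_sub]

theorem reward_eq_mul_log_ratio_add_value_sub {β r Q v v' p q : ℝ} (hβ : β ≠ 0) (hq : q ≠ 0)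
    (hpolicy : p = exp ((Q - v) / β)) (hbellman : Q = r + β * log q + v') :
    r = β * log (p / q) + (v - v') := by
  rw [hpolicy, log_div (exp_pos _).ne' hq, log_exp, mul_sub, mul_div_cancel₀ _ hβ]
  linarith

theorem dpo_token_level_reward_decomposition_general
    (T : ℕ) (β : ℝ) (hβ : 0 < β)
    (r Q V p q : ℕ → ℝ)
    (hVterm : V (T + 1) = 0)
    (hq : ∀ t ∈ Finset.Icc 1 T, 0 < q t)
    (hpolicy : ∀ t ∈ Finset.Icc 1 T, p t = Real.exp ((Q t - V t) / β))
    (hbellman : ∀ t ∈ Finset.Icc 1 T, Q t = r t + β * Real.log (q t) + V (t + 1)) :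
    ∑ t ∈ Finset.Icc 1 T, r t =
      β * ∑ t ∈ Finset.Icc 1 T, Real.log (p t / q t) + V 1 := by
  have hstep : ∀ t ∈ Icc 1 T, r t = β * log (p t / q t) + (V t - V (t + 1)) := fun t ht ↦
    reward_eq_mul_log_ratio_add_value_sub hβ.ne' (hq t ht).ne' (hpolicy t ht) (hbellman t ht)
  rw [sum_congr rfl hstep, sum_add_distrib, ← mul_sum, sum_Icc_sub_succ, hVterm, sub_zero]

/-- Theorem 1 core (token-level reward decomposition along a trajectory):
under the soft-optimal policy `p t = exp ((Q t - V t) / β)` and the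
KL-regularized Bellman equation `Q t = r t + β * log (q t) + V (t+1)` with
terminal value `V (T+1) = 0`, the response-level reward decomposes as
`∑_{t=1}^T r t = β * ∑_{t=1}^T log (p t / q t) + V 1`. -/
theorem dpo_token_level_reward_decomposition
    (T : ℕ) (hT : 1 ≤ T) (β : ℝ) (hβ : 0 < β)
    (r Q V p q : ℕ → ℝ)
    (hVterm : V (T + 1) = 0)
    (hp : ∀ t ∈ Finset.Icc 1 T, 0 < p t)
    (hq : ∀ t ∈ Finset.Icc 1 T, 0 < q t)
    (hpolicy : ∀ t ∈ Finset.Icc 1 T, p t = Real.exp ((Q t - V t) / β))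
    (hbellman : ∀ t ∈ Finset.Icc 1 T, Q t = r t + β * Real.log (q t) + V (t + 1)) :
    ∑ t ∈ Finset.Icc 1 T, r t =
      β * ∑ t ∈ Finset.Icc 1 T, Real.log (p t / q t) + V 1 :=
  dpo_token_level_reward_decomposition_general T β hβ r Q V p q hVterm hq hpolicy hbellman
end

section
/- Let ι be a nonempty finite type, let β > 0, let p_ref : ι → ℝ be strictly positive with ∑_{i} p_ref(i) = 1, and let r : ι → ℝ. Define the partition function Z = ∑_{i} p_ref(i)·exp(r(i)/β) and the Gibbs policy π*(i) = p_ref(i)·exp(r(i)/β)/Z. Then for every p : ι → ℝ with p(i) ≥ 0 for all i and ∑_{i} p(i) = 1, one has ∑_{i} p(i)·r(i) − β·∑_{i} p(i)·log(p(i)/p_ref(i)) ≤ β·log Z (with the convention 0·log(0/c) = 0), and equality holds if and only if p = π*. -/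
/-- Closed-form optimal solution of the KL-regularized alignment objective
(finite alphabet): the Gibbs policy `π*(i) = p_ref(i) * exp(r(i)/β) / Z`
maximizes `∑ p(i) r(i) − β ∑ p(i) log(p(i)/p_ref(i))` over probability vectors
`p`, with optimal value `β log Z`, and it is the unique maximizer. -/
theorem gibbs_policy_optimal
    {ι : Type*} [Fintype ι] [Nonempty ι] (β : ℝ) (hβ : 0 < β)
    (p_ref : ι → ℝ) (href : ∀ i, 0 < p_ref i) (hrefsum : ∑ i, p_ref i = 1)
    (r : ι → ℝ) (Z : ℝ) (πstar : ι → ℝ)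
    (hZ : Z = ∑ i, p_ref i * Real.exp (r i / β))
    (hπ : ∀ i, πstar i = p_ref i * Real.exp (r i / β) / Z) :
    ∀ p : ι → ℝ, (∀ i, 0 ≤ p i) → ∑ i, p i = 1 →
      (∑ i, p i * r i - β * ∑ i, p i * Real.log (p i / p_ref i) ≤ β * Real.log Z)
      ∧ ((∑ i, p i * r i - β * ∑ i, p i * Real.log (p i / p_ref i) = β * Real.log Z)
          ↔ p = πstar) := by
  have hZpos : 0 < Z := by
    rw [hZ]
    exact Finset.sum_pos (fun i _ => mul_pos (href i) (Real.exp_pos _))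
      Finset.univ_nonempty
  have hπpos : ∀ i, 0 < πstar i := fun i => by
    rw [hπ i]; exact div_pos (mul_pos (href i) (Real.exp_pos _)) hZpos
  have hπsum : ∑ i, πstar i = 1 := by
    simp only [hπ, ← Finset.sum_div, ← hZ]
    field_simp
  intro p hp hpsum
  -- termwise identity rewriting the objective via KL to πstar
  have hterm : ∀ i, p i * r i - β * (p i * Real.log (p i / p_ref i))
      = β * Real.log Z * p i - β * (p i * Real.log (p i / πstar i)) := by
    intro i
    rcases eq_or_lt_of_le (hp i) with h0 | h0
    · simp [← h0]
    · have hlogπ : Real.log (πstar i) = Real.log (p_ref i) + r i / β - Real.log Z := by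
        rw [hπ i, Real.log_div (mul_pos (href i) (Real.exp_pos _)).ne' (ne_of_gt hZpos),
          Real.log_mul (ne_of_gt (href i)) (Real.exp_ne_zero _), Real.log_exp]
      rw [Real.log_div (ne_of_gt h0) (ne_of_gt (href i)),
        Real.log_div (ne_of_gt h0) (ne_of_gt (hπpos i)), hlogπ]
      field_simp
      ring
  have key : ∑ i, p i * r i - β * ∑ i, p i * Real.log (p i / p_ref i)
      = β * Real.log Z - β * ∑ i, p i * Real.log (p i / πstar i) := by
    rw [Finset.mul_sum, ← Finset.sum_sub_distrib]
    conv_rhs =>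
      rw [show β * Real.log Z = ∑ i, β * Real.log Z * p i by
        rw [← Finset.mul_sum, hpsum, mul_one]]
    rw [Finset.mul_sum, ← Finset.sum_sub_distrib]
    exact Finset.sum_congr rfl (fun i _ => hterm i)
  -- termwise Gibbs inequality
  have htw : ∀ i, p i - πstar i ≤ p i * Real.log (p i / πstar i) := by
    intro i
    rcases eq_or_lt_of_le (hp i) with h0 | h0
    · simp [← h0, le_of_lt (hπpos i)]
    · have h1 : Real.log (πstar i / p i) ≤ πstar i / p i - 1 :=
        Real.log_le_sub_one_of_pos (div_pos (hπpos i) h0)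
      have h2 : Real.log (p i / πstar i) = - Real.log (πstar i / p i) := by
        rw [Real.log_div (ne_of_gt h0) (ne_of_gt (hπpos i)),
          Real.log_div (ne_of_gt (hπpos i)) (ne_of_gt h0)]
        ring
      rw [h2]
      have := mul_le_mul_of_nonneg_left h1 (le_of_lt h0)
      rw [mul_sub, mul_one, mul_div_cancel₀ _ (ne_of_gt h0)] at this
      nlinarith
  have hKL0 : 0 ≤ ∑ i, p i * Real.log (p i / πstar i) := by
    calc (0:ℝ) = ∑ i, (p i - πstar i) := by
          rw [Finset.sum_sub_distrib, hpsum, hπsum]; ring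
      _ ≤ _ := Finset.sum_le_sum (fun i _ => htw i)
  constructor
  · rw [key]; nlinarith
  · rw [key]
    constructor
    · intro heq
      have hKLeq : ∑ i, p i * Real.log (p i / πstar i) = 0 := by
        have : β * ∑ i, p i * Real.log (p i / πstar i) = 0 := by linarith
        exact (mul_eq_zero.mp this).resolve_left (ne_of_gt hβ)
      -- each termwise inequality is an equality
      have hsum0 : ∑ i, (p i * Real.log (p i / πstar i) - (p i - πstar i)) = 0 := by
        rw [Finset.sum_sub_distrib, hKLeq, Finset.sum_sub_distrib, hpsum, hπsum]; ring
      have heach := (Finset.sum_eq_zero_iff_of_nonneg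
        (fun i _ => sub_nonneg.mpr (htw i))).mp hsum0
      funext i
      have hi : p i * Real.log (p i / πstar i) - (p i - πstar i) = 0 :=
        heach i (Finset.mem_univ i)
      by_contra hne
      rcases eq_or_lt_of_le (hp i) with h0 | h0
      · rw [← h0] at hi
        simp at hi
        exact (hπpos i).ne' hi
      · have hx : πstar i / p i ≠ 1 := by
          intro h
          exact hne ((div_eq_one_iff_eq (ne_of_gt h0)).mp h).symm
        have h1 : Real.log (πstar i / p i) < πstar i / p i - 1 :=
          Real.log_lt_sub_one_of_pos (div_pos (hπpos i) h0) hx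
        have h2 : Real.log (p i / πstar i) = - Real.log (πstar i / p i) := by
          rw [Real.log_div (ne_of_gt h0) (ne_of_gt (hπpos i)),
            Real.log_div (ne_of_gt (hπpos i)) (ne_of_gt h0)]
          ring
        have := mul_lt_mul_of_pos_left h1 h0
        rw [mul_sub, mul_one, mul_div_cancel₀ _ (ne_of_gt h0)] at this
        rw [h2] at hi
        nlinarith
    · intro hpe
      subst hpe
      have : ∑ i, p i * Real.log (p i / p i) = 0 :=
        Finset.sum_eq_zero (fun i _ => by
          rw [div_self (ne_of_gt (hπpos i)), Real.log_one, mul_zero])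
      rw [this]; ring
end
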